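/- Inverse Laplace transform identity: for real ν > 0 and a > 0, the function s ↦ s^{-ν} exp(a/s) (defined for s > 0) is the Laplace transform of t ↦ (t/a)^{(ν-1)/2} I_{ν-1}(2√(a t)), i.e., ∫₀^∞ e^{-s t} (t/a)^{(ν-1)/2} I_{ν-1}(2√(a t)) dt = s^{-ν} e^{a/s} for all s > 0. -/

import Mathlib

open MeasureTheory Set

/-- Modified Bessel function of the first kind, via its power series
`I_ν(x) = Σ_{m=0}^∞ (x/2)^{2m+ν} / (m! Γ(m+ν+1))` (for `x > 0`). -/
noncomputable def besselI (ν x : ℝ) : ℝ :=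
  ∑' m : ℕ, (x / 2) ^ (2 * (m : ℝ) + ν) / (Nat.factorial m * Real.Gamma (m + ν + 1))

/-!
Writing `μ = ν - 1`, the power series of `I_μ` turns `(t/a)^{μ/2} I_μ(2√(at))` into
`Σ aᵐ t^{m+μ} / (m! Γ(m+μ+1))`. Each term has Laplace transform `aᵐ / (m! s^{m+μ+1})`
by Euler's Gamma integral, all terms are nonnegative, so the series may be integrated termwise,
and the result `s^{-(μ+1)} Σ (a/s)ᵐ / m!` is `s^{-ν} e^{a/s}`.
-/

open Real Nat

lemma rpow_div_mul_sqrt_rpow {μ a t : ℝ} (ha : 0 < a) (ht : 0 < t) (m : ℕ) :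
    (t / a) ^ (μ / 2) * √(a * t) ^ (2 * (m : ℝ) + μ) = a ^ m * t ^ (m + μ) := by
  rw [sqrt_eq_rpow, ← rpow_mul (by positivity), mul_rpow ha.le ht.le, div_rpow ht.le ha.le,
    show 1 / 2 * (2 * (m : ℝ) + μ) = m + μ / 2 by ring,
    show (m : ℝ) + μ = μ / 2 + (m + μ / 2) by ring, rpow_add ht (μ / 2), rpow_add ha m, rpow_natCast]
  field_simp

lemma rpow_div_mul_besselI_two_mul_sqrt {μ a t : ℝ} (ha : 0 < a) (ht : 0 < t) :
    (t / a) ^ (μ / 2) * besselI μ (2 * √(a * t)) =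
      ∑' m : ℕ, a ^ m / (m ! * Gamma (m + μ + 1)) * t ^ (m + μ) := by
  rw [besselI, ← tsum_mul_left]
  refine tsum_congr fun m => ?_
  rw [mul_div_cancel_left₀ _ two_ne_zero, mul_div_assoc', rpow_div_mul_sqrt_rpow ha ht]
  ring

lemma integrableOn_exp_neg_mul_mul_rpow {r s : ℝ} (hr : -1 < r) (hs : 0 < s) :
    IntegrableOn (fun t => exp (-s * t) * t ^ r) (Ioi 0) := by
  simpa [mul_comm] using integrableOn_rpow_mul_exp_neg_mul_rpow hr one_pos hs

lemma integral_exp_neg_mul_mul_rpow {r s : ℝ} (hr : -1 < r) (hs : 0 < s) :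
    ∫ t in Ioi 0, exp (-s * t) * t ^ r = Gamma (r + 1) / s ^ (r + 1) := by
  have := integral_rpow_mul_exp_neg_mul_Ioi (a := r + 1) (by linarith) hs
  simp only [add_sub_cancel_right, one_div, inv_rpow hs.le] at this
  simpa [mul_comm, div_eq_inv_mul] using this

lemma integral_exp_neg_mul_mul_tsum_rpow {c : ℕ → ℝ} {μ s : ℝ} (hμ : -1 < μ) (hs : 0 < s)
    (hc : Summable fun m : ℕ => |c m| * (Gamma (m + μ + 1) / s ^ (m + μ + 1))) :
    ∫ t in Ioi 0, exp (-s * t) * ∑' m : ℕ, c m * t ^ (m + μ) =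
      ∑' m : ℕ, c m * (Gamma (m + μ + 1) / s ^ (m + μ + 1)) := by
  have hr (m : ℕ) : -1 < (m : ℝ) + μ := by linarith [m.cast_nonneg (α := ℝ)]
  set F : ℕ → ℝ → ℝ := fun m t => c m * (exp (-s * t) * t ^ (m + μ))
  have hF_int (m : ℕ) : IntegrableOn (F m) (Ioi 0) :=
    (integrableOn_exp_neg_mul_mul_rpow (hr m) hs).const_mul _
  have hF_norm (m : ℕ) :
      ∫ t in Ioi 0, ‖F m t‖ = |c m| * (Gamma (m + μ + 1) / s ^ (m + μ + 1)) := by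
    rw [← integral_exp_neg_mul_mul_rpow (hr m) hs, ← integral_const_mul]
    refine setIntegral_congr_fun measurableSet_Ioi fun t ht => ?_
    rw [norm_mul, norm_eq_abs, norm_of_nonneg (mul_nonneg (exp_pos _).le (rpow_nonneg ht.le _))]
  calc ∫ t in Ioi 0, exp (-s * t) * ∑' m : ℕ, c m * t ^ (m + μ)
      = ∫ t in Ioi 0, ∑' m, F m t := by
        congr 1 with t
        rw [← tsum_mul_left]
        exact tsum_congr fun m => mul_left_comm _ _ _
    _ = ∑' m, ∫ t in Ioi 0, F m t :=
        (integral_tsum_of_summable_integral_norm hF_int (by simpa only [hF_norm] using hc)).symm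
    _ = ∑' m : ℕ, c m * (Gamma (m + μ + 1) / s ^ (m + μ + 1)) :=
        tsum_congr fun m => by rw [integral_const_mul, integral_exp_neg_mul_mul_rpow (hr m) hs]

/-- Inverse Laplace transform identity (Abramowitz–Stegun 29.3.81): for `ν, a > 0`,
`∫₀^∞ e^{-s t} (t/a)^{(ν-1)/2} I_{ν-1}(2√(a t)) dt = s^{-ν} e^{a/s}` for all `s > 0`. -/
theorem laplace_besselI_identity (ν a : ℝ) (hν : 0 < ν) (ha : 0 < a) :
    ∀ s : ℝ, 0 < s →
      ∫ t in Ioi (0:ℝ),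
          Real.exp (-s * t) * (t / a) ^ ((ν - 1) / 2) * besselI (ν - 1) (2 * Real.sqrt (a * t)) =
        s ^ (-ν) * Real.exp (a / s) := by
  intro s hs
  set c : ℕ → ℝ := fun m => a ^ m / (m ! * Gamma (m + (ν - 1) + 1))
  have hΓ (m : ℕ) : 0 < Gamma (m + (ν - 1) + 1) :=
    Gamma_pos_of_pos (by linarith [m.cast_nonneg (α := ℝ)])
  have hc (m : ℕ) : 0 ≤ c m := by have := hΓ m; positivity
  have hterm (m : ℕ) : c m * (Gamma (m + (ν - 1) + 1) / s ^ (m + (ν - 1) + 1)) =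
      s ^ (-ν) * ((a / s) ^ m / m !) := by
    have := (hΓ m).ne'
    simp only [c]
    rw [show (m : ℝ) + (ν - 1) + 1 = m + ν by ring] at this ⊢
    rw [rpow_add hs, rpow_natCast, rpow_neg hs.le, div_pow]
    field_simp
  have hexp : HasSum (fun m : ℕ => s ^ (-ν) * ((a / s) ^ m / m !)) (s ^ (-ν) * exp (a / s)) :=
    (exp_eq_exp_ℝ ▸ NormedSpace.expSeries_div_hasSum_exp (a / s)).mul_left _
  calc _ = ∫ t in Ioi 0, exp (-s * t) * ∑' m : ℕ, c m * t ^ (m + (ν - 1)) :=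
        setIntegral_congr_fun measurableSet_Ioi fun t ht => by
          rw [mul_assoc, rpow_div_mul_besselI_two_mul_sqrt ha ht]
    _ = ∑' m : ℕ, c m * (Gamma (m + (ν - 1) + 1) / s ^ (m + (ν - 1) + 1)) :=
        integral_exp_neg_mul_mul_tsum_rpow (by linarith) hs
          (by simpa only [abs_of_nonneg (hc _), hterm] using hexp.summable)
    _ = s ^ (-ν) * exp (a / s) := (tsum_congr hterm).trans hexp.tsum_eq
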